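/- arXiv:1910.01754 — 3 statements merged into one kernel-verified Lean document; each statement's English description precedes it below -/
import Mathlib

section
/- Let θ: ℝ → ℝ be a measurable nonnegative weight function. For any n ∈ ℕ, any real coefficients c₁, …, cₙ ∈ ℝ, and any integrable functions I₁, …, Iₙ : ℝ → ℝ such that for every pair (i, j) the quantity D_{ij} = ∫ θ(ξ)(|Î_i(ξ)| − |Î_j(ξ)|)² dξ is finite, the spectral-distance (SpeD) correlation function is a positive semi-definite kernel: ∑_{i=1}^{n} ∑_{j=1}^{n} c_i c_j exp(−∫ θ(ξ)(|Î_i(ξ)| − |Î_j(ξ)|)² dξ) ≥ 0. -/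
/-!
For each ξ, the matrix `θ(ξ) (xᵢ - xⱼ)²` is conditionally negative semidefinite: on vectors with
`∑ aᵢ = 0` its quadratic form is `-2 θ(ξ) (∑ aᵢ xᵢ)²`. Integration preserves this, so the SpeD
distance matrix `D` is conditionally negative semidefinite, and Schoenberg's argument makes
`exp (-D)` positive semidefinite: centering `D` at an index `i₀` gives a positive semidefinite
matrix `K` with `exp (-Dᵢⱼ) = exp (Dᵢ₀ᵢ₀) uᵢ uⱼ exp Kᵢⱼ`, where `uᵢ = exp (-Dᵢᵢ₀)`, and the
entrywise exponential of a positive semidefinite matrix is positive semidefinite, term by term in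
its power series, by the Schur product theorem.
-/

open MeasureTheory Real

/-- The Fourier transform of a real-valued function `I : ℝ → ℝ`,
`Î(ξ) = ∫ I(t) e^{−2πi t ξ} dt`. -/
noncomputable def fourierOfReal (I : ℝ → ℝ) : ℝ → ℂ :=
  FourierTransform.fourier (fun t : ℝ => (I t : ℂ))

namespace Matrix

variable {ι : Type*} [Fintype ι]

lemma dotProduct_mulVec_self_eq_sum_sum (M : Matrix ι ι ℝ) (x : ι → ℝ) :
    x ⬝ᵥ M *ᵥ x = ∑ i, ∑ j, x i * x j * M i j := by
  simp only [dotProduct, mulVec, Finset.mul_sum]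
  exact Finset.sum_congr rfl fun i _ => Finset.sum_congr rfl fun j _ => by ring

lemma PosSemidef.map_pow {M : Matrix ι ι ℝ} (hM : M.PosSemidef) (k : ℕ) :
    (M.map (· ^ k)).PosSemidef := by
  induction k with
  | zero =>
    convert posSemidef_vecMulVec_self_star (fun _ : ι => (1 : ℝ)) using 1
    ext
    simp [vecMulVec]
  | succ k ih =>
    have h : M.map (· ^ (k + 1)) = M.map (· ^ k) ⊙ M := by ext; simp [pow_succ]
    exact h ▸ ih.hadamard hM

lemma PosSemidef.map_exp {M : Matrix ι ι ℝ} (hM : M.PosSemidef) :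
    (M.map Real.exp).PosSemidef := by
  refine .of_dotProduct_mulVec_nonneg
    (IsHermitian.ext fun i j => by simpa using congrArg Real.exp (hM.1.apply i j)) fun x => ?_
  have hsum : HasSum (fun k : ℕ => star x ⬝ᵥ (((k.factorial : ℝ)⁻¹ • M.map (· ^ k)) *ᵥ x))
      (star x ⬝ᵥ (M.map Real.exp *ᵥ x)) := by
    simp only [dotProduct, mulVec, map_apply, smul_apply, smul_eq_mul]
    refine hasSum_sum fun i _ => .mul_left _ (hasSum_sum fun j _ => .mul_right _ ?_)
    simpa [Real.exp_eq_exp_ℝ, div_eq_inv_mul] using NormedSpace.expSeries_div_hasSum_exp (M i j)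
  exact hsum.nonneg fun k =>
    ((hM.map_pow k).smul (by positivity)).dotProduct_mulVec_nonneg x

def CondNegSemidef (D : Matrix ι ι ℝ) : Prop :=
  D.IsSymm ∧ ∀ a : ι → ℝ, ∑ i, a i = 0 → ∑ i, ∑ j, a i * a j * D i j ≤ 0

lemma condNegSemidef_sq_sub (x : ι → ℝ) : (of fun i j => (x i - x j) ^ 2).CondNegSemidef := by
  refine ⟨IsSymm.ext fun i j => by simp only [of_apply]; ring, fun a ha => ?_⟩
  calc ∑ i, ∑ j, a i * a j * of (fun i j => (x i - x j) ^ 2) i j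
      = ∑ i, ∑ j, (a i * x i ^ 2 * a j + a i * (a j * x j ^ 2)
          - 2 * ((a i * x i) * (a j * x j))) := by
        simp only [of_apply]
        exact Finset.sum_congr rfl fun i _ => Finset.sum_congr rfl fun j _ => by ring
    _ = (∑ i, a i * x i ^ 2) * ∑ j, a j + (∑ i, a i) * (∑ j, a j * x j ^ 2)
          - 2 * ((∑ i, a i * x i) * ∑ j, a j * x j) := by
        rw [Finset.sum_mul_sum, Finset.sum_mul_sum, Finset.sum_mul_sum, Finset.mul_sum]
        simp only [Finset.mul_sum, ← Finset.sum_add_distrib, ← Finset.sum_sub_distrib]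
    _ ≤ 0 := by rw [ha]; nlinarith [sq_nonneg (∑ i, a i * x i)]

lemma CondNegSemidef.smul {D : Matrix ι ι ℝ} (hD : D.CondNegSemidef) {c : ℝ} (hc : 0 ≤ c) :
    (c • D).CondNegSemidef := by
  refine ⟨hD.1.smul c, fun a ha => ?_⟩
  calc ∑ i, ∑ j, a i * a j * (c • D) i j = c * ∑ i, ∑ j, a i * a j * D i j := by
        simp only [smul_apply, smul_eq_mul, Finset.mul_sum]
        exact Finset.sum_congr rfl fun i _ => Finset.sum_congr rfl fun j _ => by ring
    _ ≤ 0 := mul_nonpos_of_nonneg_of_nonpos hc (hD.2 a ha)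

lemma CondNegSemidef.integral {α : Type*} [MeasurableSpace α] {μ : Measure α}
    {D : α → Matrix ι ι ℝ} (hD : ∀ᵐ ξ ∂μ, (D ξ).CondNegSemidef)
    (hint : ∀ i j, Integrable (fun ξ => D ξ i j) μ) :
    (of fun i j => ∫ ξ, D ξ i j ∂μ).CondNegSemidef := by
  refine ⟨IsSymm.ext fun i j => integral_congr_ae (hD.mono fun ξ h => h.1.apply i j),
    fun a ha => ?_⟩
  have hform : ∑ i, ∑ j, a i * a j * of (fun i j => ∫ ξ, D ξ i j ∂μ) i j
      = ∫ ξ, ∑ i, ∑ j, a i * a j * D ξ i j ∂μ := by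
    simp only [of_apply, ← integral_const_mul]
    rw [integral_finsetSum _ fun i _ => integrable_finsetSum _ fun j _ => (hint i j).const_mul _]
    exact Finset.sum_congr rfl fun i _ =>
      (integral_finsetSum _ fun j _ => (hint i j).const_mul _).symm
  rw [hform]
  exact integral_nonpos_of_ae (hD.mono fun ξ h => h.2 a ha)

-- Test `D` against `x - (∑ x) • eᵢ₀`, whose coordinates sum to zero.
lemma CondNegSemidef.posSemidef_centered {D : Matrix ι ι ℝ} (hD : D.CondNegSemidef) (i₀ : ι) :
    (of fun i j => D i i₀ + D i₀ j - D i j - D i₀ i₀).PosSemidef := by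
  classical
  refine .of_dotProduct_mulVec_nonneg (IsHermitian.ext fun i j => ?_) fun x => ?_
  · simp only [of_apply, star_trivial, hD.1.apply]
    ring
  set s := ∑ k, x k
  set b : ι → ℝ := x - Pi.single i₀ s
  have hb : ∑ i, b i = 0 := by simp [b, s]
  have hbD : ∑ i, ∑ j, b i * b j * D i j
      = ∑ i, ∑ j, x i * x j * D i j - s * ∑ i, x i * D i i₀ - s * ∑ j, x j * D i₀ j
        + s ^ 2 * D i₀ i₀ := by
    simp only [b, Pi.sub_apply, Pi.single_apply, mul_sub, sub_mul, ite_mul, zero_mul, mul_ite,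
      mul_zero, Finset.sum_sub_distrib, Finset.sum_ite_irrel, Finset.sum_const_zero,
      Finset.sum_ite_eq', Finset.mem_univ, ↓reduceIte, Finset.mul_sum]
    ring_nf
  have hxK : ∑ i, ∑ j, x i * x j * (D i i₀ + D i₀ j - D i j - D i₀ i₀)
      = -∑ i, ∑ j, b i * b j * D i j := by
    rw [hbD]
    calc ∑ i, ∑ j, x i * x j * (D i i₀ + D i₀ j - D i j - D i₀ i₀)
        = ∑ i, ∑ j, ((x i * D i i₀) * x j + x i * (x j * D i₀ j) - x i * x j * D i j
            - (x i * D i₀ i₀) * x j) :=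
          Finset.sum_congr rfl fun i _ => Finset.sum_congr rfl fun j _ => by ring
      _ = (∑ i, x i * D i i₀) * s + s * ∑ j, x j * D i₀ j - ∑ i, ∑ j, x i * x j * D i j
            - (∑ i, x i * D i₀ i₀) * s := by
          simp only [s, Finset.sum_add_distrib, Finset.sum_sub_distrib, ← Finset.sum_mul_sum]
      _ = _ := by rw [← Finset.sum_mul]; ring
  rw [star_trivial, dotProduct_mulVec_self_eq_sum_sum]
  simp only [of_apply, hxK]
  exact neg_nonneg.mpr (hD.2 b hb)

theorem CondNegSemidef.posSemidef_map_exp_neg {D : Matrix ι ι ℝ} (hD : D.CondNegSemidef) :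
    (D.map fun d => Real.exp (-d)).PosSemidef := by
  classical
  rcases isEmpty_or_nonempty ι with hι | ⟨⟨i₀⟩⟩
  · exact .of_dotProduct_mulVec_nonneg (IsHermitian.ext isEmptyElim) fun x => by simp
  set u : ι → ℝ := fun i => Real.exp (-D i i₀)
  have hfactor : D.map (fun d => Real.exp (-d)) = Real.exp (D i₀ i₀) •
      ((diagonal u)ᴴ * (of fun i j => D i i₀ + D i₀ j - D i j - D i₀ i₀).map Real.exp *
        diagonal u) := by
    ext i j
    simp only [map_apply, smul_apply, smul_eq_mul, diagonal_conjTranspose, star_trivial,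
      diagonal_mul, mul_diagonal, of_apply, u, ← Real.exp_add, hD.1.apply j i₀]
    congr 1
    ring
  exact hfactor ▸ ((hD.posSemidef_centered i₀).map_exp.conjTranspose_mul_mul_same _).smul
    (Real.exp_pos _).le

end Matrix

theorem speD_correlation_posSemidef_general
    (θ : ℝ → ℝ) (hθ_nonneg : ∀ ξ, 0 ≤ θ ξ)
    (n : ℕ) (c : Fin n → ℝ) (I : Fin n → ℝ → ℝ)
    (hD : ∀ i j, Integrable (fun ξ =>
      θ ξ * (‖fourierOfReal (I i) ξ‖ - ‖fourierOfReal (I j) ξ‖) ^ 2)) :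
    0 ≤ ∑ i, ∑ j, c i * c j *
      Real.exp (-∫ ξ, θ ξ *
        (‖fourierOfReal (I i) ξ‖ - ‖fourierOfReal (I j) ξ‖) ^ 2) := by
  have hcnd : (Matrix.of fun i j => ∫ ξ, θ ξ *
      (‖fourierOfReal (I i) ξ‖ - ‖fourierOfReal (I j) ξ‖) ^ 2).CondNegSemidef :=
    Matrix.CondNegSemidef.integral (μ := volume)
      (ae_of_all _ fun ξ => (Matrix.condNegSemidef_sq_sub _).smul (hθ_nonneg ξ)) hD
  have hpsd := hcnd.posSemidef_map_exp_neg.dotProduct_mulVec_nonneg c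
  rw [star_trivial, Matrix.dotProduct_mulVec_self_eq_sum_sum] at hpsd
  simpa using hpsd

/-- The SpeD correlation function is a positive semi-definite kernel. -/
theorem speD_correlation_posSemidef
    (θ : ℝ → ℝ) (hθ_meas : Measurable θ) (hθ_nonneg : ∀ ξ, 0 ≤ θ ξ)
    (n : ℕ) (c : Fin n → ℝ) (I : Fin n → ℝ → ℝ)
    (hI : ∀ i, Integrable (I i))
    (hD : ∀ i j, Integrable (fun ξ =>
      θ ξ * (‖fourierOfReal (I i) ξ‖ - ‖fourierOfReal (I j) ξ‖) ^ 2)) :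
    0 ≤ ∑ i, ∑ j, c i * c j *
      Real.exp (-∫ ξ, θ ξ *
        (‖fourierOfReal (I i) ξ‖ - ‖fourierOfReal (I j) ξ‖) ^ 2) :=
  speD_correlation_posSemidef_general θ hθ_nonneg n c I hD
end

section
/- Fix p ∈ ℕ with p ≥ 1 and nonnegative weights θ₀, …, θ_{p−1} ≥ 0. For x ∈ ℝ^p let x̂_k = ∑_{l=0}^{p−1} x_l e^{−2πi l k / p} denote its discrete Fourier transform. Then the discrete SpeD kernel ρ(x, z) = exp(−∑_{k=0}^{p−1} θ_k (|x̂_k| − |ẑ_k|)²) is a positive semi-definite kernel on ℝ^p: for any n ∈ ℕ, any c₁, …, cₙ ∈ ℝ, and any x₁, …, xₙ ∈ ℝ^p, ∑_{i=1}^{n} ∑_{j=1}^{n} c_i c_j ρ(x_i, x_j) ≥ 0. -/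
open scoped Real

/-- The discrete Fourier transform of `x ∈ ℝ^p`: `x̂_k = ∑_{l=0}^{p−1} x_l e^{−2πi l k / p}`. -/
noncomputable def dft (p : ℕ) (x : Fin p → ℝ) (k : Fin p) : ℂ :=
  ∑ l : Fin p, (x l : ℂ) *
    Complex.exp (-2 * (π : ℂ) * Complex.I * (l : ℕ) * (k : ℕ) / (p : ℂ))

/-- The discrete SpeD kernel with nonnegative weights `θ₀, …, θ_{p−1}`:
`ρ(x, z) = exp(−∑_k θ_k (|x̂_k| − |ẑ_k|)²)`. -/
noncomputable def discreteSpeD (p : ℕ) (θ : Fin p → ℝ) (x z : Fin p → ℝ) : ℝ :=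
  Real.exp (-∑ k, θ k * (‖dft p x k‖ - ‖dft p z k‖) ^ 2)

/-! The SpeD kernel is the weighted Gaussian kernel `exp (-∑ θ_k (a_k - b_k)²)` evaluated at the
moduli `a = |x̂|`, `b = |ẑ|`, so it suffices that this Gaussian kernel is positive semidefinite.
Expanding the square writes it as `f a * f b * exp ⟪w a, w b⟫` with `f a = exp (-∑ θ_k a_k²)` and
`w a = √(2θ) a`; the factors `f` are absorbed into the coefficients, and `exp ⟪u, v⟫ = ∑ₘ ⟪u, v⟫ᵐ / m!` is a nonnegative
combination of the kernels `⟪u, v⟫ᵐ = ⟪u^{⊗m}, v^{⊗m}⟫`, which are Gram kernels. -/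

open Finset Matrix

section
variable {ι κ : Type*} [Fintype ι] [Fintype κ]

theorem sum_sum_mul_mul_dotProduct_nonneg (c : ι → ℝ) (v : ι → κ → ℝ) :
    0 ≤ ∑ i, ∑ j, c i * c j * (v i ⬝ᵥ v j) := by
  have h : ∑ k, (∑ i, c i * v i k) ^ 2 = ∑ i, ∑ j, c i * c j * (v i ⬝ᵥ v j) := by
    simp only [sq, dotProduct, mul_sum, sum_mul]
    rw [Finset.sum_comm]
    refine Finset.sum_congr rfl fun i _ => ?_
    rw [Finset.sum_comm]
    exact Finset.sum_congr rfl fun j _ => Finset.sum_congr rfl fun k _ => by ring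
  rw [← h]
  exact sum_nonneg fun k _ => sq_nonneg _

theorem dotProduct_pow_eq_dotProduct_prod (u v : κ → ℝ) (m : ℕ) :
    (u ⬝ᵥ v) ^ m = (fun f : Fin m → κ => ∏ t, u (f t)) ⬝ᵥ (fun f => ∏ t, v (f t)) := by
  simp only [dotProduct, Fintype.sum_pow, prod_mul_distrib]

theorem sum_sum_mul_mul_exp_dotProduct_nonneg (c : ι → ℝ) (u : ι → κ → ℝ) :
    0 ≤ ∑ i, ∑ j, c i * c j * Real.exp (u i ⬝ᵥ u j) := by
  have hsum : ∀ i j, Summable fun m : ℕ => c i * c j * ((u i ⬝ᵥ u j) ^ m / m.factorial) :=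
    fun i j => (Real.summable_pow_div_factorial _).mul_left _
  have hexp : ∀ i j, c i * c j * Real.exp (u i ⬝ᵥ u j)
      = ∑' m : ℕ, c i * c j * ((u i ⬝ᵥ u j) ^ m / m.factorial) := fun i j => by
    rw [Real.exp_eq_exp_ℝ, NormedSpace.exp_eq_tsum_div, tsum_mul_left]
  have hseries : ∑ i, ∑ j, c i * c j * Real.exp (u i ⬝ᵥ u j)
      = ∑' m : ℕ, (∑ i, ∑ j, c i * c j * (u i ⬝ᵥ u j) ^ m) / m.factorial := by
    simp only [hexp, sum_div, mul_div_assoc]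
    rw [Summable.tsum_finsetSum fun i _ => summable_sum fun j _ => hsum i j]
    exact Finset.sum_congr rfl fun i _ => (Summable.tsum_finsetSum fun j _ => hsum i j).symm
  rw [hseries]
  refine tsum_nonneg fun m => div_nonneg ?_ (Nat.cast_nonneg _)
  simp only [dotProduct_pow_eq_dotProduct_prod]
  exact sum_sum_mul_mul_dotProduct_nonneg c _

theorem exp_neg_weighted_sq_dist_eq (θ : κ → ℝ) (hθ : ∀ k, 0 ≤ θ k) (a b : κ → ℝ) :
    Real.exp (-∑ k, θ k * (a k - b k) ^ 2)
      = Real.exp (-∑ k, θ k * a k ^ 2) * Real.exp (-∑ k, θ k * b k ^ 2) *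
        Real.exp ((fun k => √(2 * θ k) * a k) ⬝ᵥ fun k => √(2 * θ k) * b k) := by
  have hcross : ∀ k, √(2 * θ k) * a k * (√(2 * θ k) * b k) = 2 * θ k * (a k * b k) := fun k => by
    rw [mul_mul_mul_comm, Real.mul_self_sqrt (by linarith [hθ k])]
  rw [← Real.exp_add, ← Real.exp_add, dotProduct]
  simp only [hcross, ← sum_neg_distrib, ← sum_add_distrib]
  exact congrArg Real.exp (Finset.sum_congr rfl fun k _ => by ring)

theorem sum_sum_mul_mul_exp_neg_weighted_sq_dist_nonneg (θ : κ → ℝ) (hθ : ∀ k, 0 ≤ θ k)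
    (c : ι → ℝ) (a : ι → κ → ℝ) :
    0 ≤ ∑ i, ∑ j, c i * c j * Real.exp (-∑ k, θ k * (a i k - a j k) ^ 2) := by
  simp only [exp_neg_weighted_sq_dist_eq θ hθ]
  convert sum_sum_mul_mul_exp_dotProduct_nonneg (fun i => c i * Real.exp (-∑ k, θ k * a i k ^ 2))
    (fun i k => √(2 * θ k) * a i k) using 3
  ring

end

theorem discreteSpeD_posSemidef_general
    (p : ℕ) (θ : Fin p → ℝ) (hθ : ∀ k, 0 ≤ θ k)
    (n : ℕ) (c : Fin n → ℝ) (x : Fin n → Fin p → ℝ) :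
    0 ≤ ∑ i, ∑ j, c i * c j * discreteSpeD p θ (x i) (x j) :=
  sum_sum_mul_mul_exp_neg_weighted_sq_dist_nonneg θ hθ c fun i k => ‖dft p (x i) k‖

/-- The discrete SpeD kernel is a positive semi-definite kernel on `ℝ^p`. -/
theorem discreteSpeD_posSemidef
    (p : ℕ) (hp : 1 ≤ p) (θ : Fin p → ℝ) (hθ : ∀ k, 0 ≤ θ k)
    (n : ℕ) (c : Fin n → ℝ) (x : Fin n → Fin p → ℝ) :
    0 ≤ ∑ i, ∑ j, c i * c j * discreteSpeD p θ (x i) (x j) :=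
  discreteSpeD_posSemidef_general p θ hθ n c x
end

section
/- Fix p ∈ ℕ with p ≥ 1, nonnegative weights θ₀, …, θ_{p−1} ≥ 0, and θ_d ≥ 0. The separable correlation function on ℝ × ℝ^p defined by ρ_s((d₁, x₁), (d₂, x₂)) = ρ(x₁, x₂) · exp(−θ_d (d₁ − d₂)²), where ρ is the discrete SpeD kernel, is a positive semi-definite kernel: for any n ∈ ℕ, any c₁, …, cₙ ∈ ℝ, and any pairs (d₁, x₁), …, (dₙ, xₙ) ∈ ℝ × ℝ^p, ∑_{i=1}^{n} ∑_{j=1}^{n} c_i c_j ρ_s((d_i, x_i), (d_j, x_j)) ≥ 0. -/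
open scoped Real

/-- The separable correlation `ρ_s((d₁, x₁), (d₂, x₂)) = ρ(x₁, x₂)·exp(−θ_d(d₁ − d₂)²)`,
where `ρ` is the discrete SpeD kernel and `d` is the scalar fiber diameter. -/
noncomputable def separableSpeD (p : ℕ) (θ : Fin p → ℝ) (θd : ℝ)
    (v₁ v₂ : ℝ × (Fin p → ℝ)) : ℝ :=
  discreteSpeD p θ v₁.2 v₂.2 * Real.exp (-θd * (v₁.1 - v₂.1) ^ 2)

/-!
Write `exp (-t (x - y)²) = e^{-t x²} e^{-t y²} exp (2 t x y)`. The kernel `2 t x y` is a nonnegative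
multiple of a rank-one Gram kernel, and `exp K = ∑ₘ Kᵐ / m!` is a convergent nonnegative
combination of Hadamard powers of `K`, which are positive semi-definite by the Schur product
theorem. The SpeD kernel is a product of such Gaussians in the moduli `|x̂_k|`, and the separable
kernel one more Gaussian factor in `d`.
-/

open Matrix

def IsPosSemidefKernel {α : Type*} (K : α → α → ℝ) : Prop :=
  ∀ (n : ℕ) (v : Fin n → α), (of fun i j => K (v i) (v j)).PosSemidef

theorem Matrix.star_dotProduct_mulVec_eq_sum_sum {n : Type*} [Fintype n] (M : Matrix n n ℝ)
    (c : n → ℝ) : star c ⬝ᵥ M *ᵥ c = ∑ i, ∑ j, c i * c j * M i j := by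
  simp only [dotProduct, mulVec, star_trivial, Finset.mul_sum]
  exact Finset.sum_congr rfl fun i _ => Finset.sum_congr rfl fun j _ => by ring

theorem isPosSemidefKernel_mul_self {α : Type*} (g : α → ℝ) :
    IsPosSemidefKernel fun x y => g x * g y :=
  fun n v => by simpa [vecMulVec, of_apply] using posSemidef_vecMulVec_self_star (g ∘ v)

namespace IsPosSemidefKernel

variable {α β : Type*}

theorem sum_sum_mul_nonneg {K : α → α → ℝ} (hK : IsPosSemidefKernel K) {n : ℕ} (c : Fin n → ℝ)
    (v : Fin n → α) : 0 ≤ ∑ i, ∑ j, c i * c j * K (v i) (v j) := by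
  simpa only [star_dotProduct_mulVec_eq_sum_sum, of_apply] using (hK n v).dotProduct_mulVec_nonneg c

theorem comp {K : α → α → ℝ} (hK : IsPosSemidefKernel K) (f : β → α) :
    IsPosSemidefKernel fun x y => K (f x) (f y) :=
  fun n v => hK n (f ∘ v)

theorem mul {K L : α → α → ℝ} (hK : IsPosSemidefKernel K) (hL : IsPosSemidefKernel L) :
    IsPosSemidefKernel fun x y => K x y * L x y :=
  fun n v => (hK n v).hadamard (hL n v)

theorem const_mul {K : α → α → ℝ} (hK : IsPosSemidefKernel K) {a : ℝ} (ha : 0 ≤ a) :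
    IsPosSemidefKernel fun x y => a * K x y :=
  fun n v => (hK n v).smul ha

theorem tsum {K : ℕ → α → α → ℝ} (hK : ∀ m, IsPosSemidefKernel (K m))
    (hs : ∀ x y, Summable fun m => K m x y) : IsPosSemidefKernel fun x y => ∑' m, K m x y := by
  intro n v
  refine .of_dotProduct_mulVec_nonneg (.ext fun i j => ?_) fun c => ?_
  · simp only [of_apply, star_trivial]
    exact tsum_congr fun m => by simpa using (hK m n v).isHermitian.apply i j
  · rw [star_dotProduct_mulVec_eq_sum_sum]
    calc (0 : ℝ) ≤ ∑' m, ∑ i, ∑ j, c i * c j * K m (v i) (v j) :=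
          tsum_nonneg fun m => (hK m).sum_sum_mul_nonneg c v
      _ = ∑ i, ∑ j, c i * c j * ∑' m, K m (v i) (v j) := by
          simp only [← tsum_mul_left]
          rw [Summable.tsum_finsetSum fun i _ => summable_sum fun j _ => (hs _ _).mul_left _]
          exact Finset.sum_congr rfl fun i _ =>
            Summable.tsum_finsetSum fun j _ => (hs _ _).mul_left _

theorem one : IsPosSemidefKernel fun _ _ : α => (1 : ℝ) := by
  simpa using isPosSemidefKernel_mul_self fun _ : α => (1 : ℝ)

theorem prod {ι : Type*} {K : ι → α → α → ℝ} (s : Finset ι)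
    (hK : ∀ k ∈ s, IsPosSemidefKernel (K k)) :
    IsPosSemidefKernel fun x y => ∏ k ∈ s, K k x y := by
  classical
  induction s using Finset.induction_on with
  | empty => simpa using one
  | insert a s ha ih =>
    simp only [Finset.prod_insert ha]
    exact (hK a (s.mem_insert_self a)).mul (ih fun k hk => hK k (Finset.mem_insert_of_mem hk))

theorem pow {K : α → α → ℝ} (hK : IsPosSemidefKernel K) (m : ℕ) :
    IsPosSemidefKernel fun x y => K x y ^ m := by
  simpa using prod (K := fun _ => K) (Finset.range m) fun _ _ => hK

theorem exp {K : α → α → ℝ} (hK : IsPosSemidefKernel K) :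
    IsPosSemidefKernel fun x y => Real.exp (K x y) := by
  have hsum : ∀ x y, Summable fun m : ℕ => (m.factorial : ℝ)⁻¹ * K x y ^ m := fun x y => by
    simpa only [div_eq_inv_mul] using Real.summable_pow_div_factorial (K x y)
  have hexp := tsum (fun m => (hK.pow m).const_mul (inv_nonneg.2 (Nat.cast_nonneg m.factorial))) hsum
  simpa only [Real.exp_eq_exp_ℝ, NormedSpace.exp_eq_tsum_div, div_eq_inv_mul] using hexp

end IsPosSemidefKernel

theorem isPosSemidefKernel_gaussian {t : ℝ} (ht : 0 ≤ t) :
    IsPosSemidefKernel fun x y : ℝ => Real.exp (-t * (x - y) ^ 2) := by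
  have hsplit : ∀ x y : ℝ, Real.exp (-t * (x - y) ^ 2)
      = Real.exp (-t * x ^ 2) * Real.exp (-t * y ^ 2) * Real.exp (2 * t * (x * y)) := by
    intro x y
    rw [← Real.exp_add, ← Real.exp_add]
    ring_nf
  simp only [hsplit]
  exact (isPosSemidefKernel_mul_self _).mul
    ((isPosSemidefKernel_mul_self id).const_mul (by positivity)).exp

theorem isPosSemidefKernel_weighted_gaussian {ι : Type*} [Fintype ι] {t : ι → ℝ}
    (ht : ∀ k, 0 ≤ t k) :
    IsPosSemidefKernel fun x y : ι → ℝ => Real.exp (-∑ k, t k * (x k - y k) ^ 2) := by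
  have hprod : ∀ x y : ι → ℝ, Real.exp (-∑ k, t k * (x k - y k) ^ 2)
      = ∏ k, Real.exp (-t k * (x k - y k) ^ 2) := fun x y => by
    simp only [← Finset.sum_neg_distrib, Real.exp_sum, neg_mul]
  simp only [hprod]
  exact .prod _ fun k _ => ((isPosSemidefKernel_gaussian (ht k)).comp fun x : ι → ℝ => x k :)

theorem isPosSemidefKernel_discreteSpeD {p : ℕ} {θ : Fin p → ℝ} (hθ : ∀ k, 0 ≤ θ k) :
    IsPosSemidefKernel (discreteSpeD p θ) :=
  (isPosSemidefKernel_weighted_gaussian hθ).comp fun x k => ‖dft p x k‖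

theorem isPosSemidefKernel_separableSpeD {p : ℕ} {θ : Fin p → ℝ} (hθ : ∀ k, 0 ≤ θ k) {θd : ℝ}
    (hθd : 0 ≤ θd) : IsPosSemidefKernel (separableSpeD p θ θd) :=
  ((isPosSemidefKernel_discreteSpeD hθ).comp Prod.snd).mul
    ((isPosSemidefKernel_gaussian hθd).comp Prod.fst)

theorem separableSpeD_posSemidef_general
    (p : ℕ) (θ : Fin p → ℝ) (hθ : ∀ k, 0 ≤ θ k) (θd : ℝ) (hθd : 0 ≤ θd)
    (n : ℕ) (c : Fin n → ℝ) (v : Fin n → ℝ × (Fin p → ℝ)) :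
    0 ≤ ∑ i, ∑ j, c i * c j * separableSpeD p θ θd (v i) (v j) :=
  (isPosSemidefKernel_separableSpeD hθ hθd).sum_sum_mul_nonneg c v

/-- The separable correlation function is a positive semi-definite kernel on `ℝ × ℝ^p`. -/
theorem separableSpeD_posSemidef
    (p : ℕ) (hp : 1 ≤ p) (θ : Fin p → ℝ) (hθ : ∀ k, 0 ≤ θ k) (θd : ℝ) (hθd : 0 ≤ θd)
    (n : ℕ) (c : Fin n → ℝ) (v : Fin n → ℝ × (Fin p → ℝ)) :
    0 ≤ ∑ i, ∑ j, c i * c j * separableSpeD p θ θd (v i) (v j) :=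
  separableSpeD_posSemidef_general p θ hθ θd hθd n c v
end
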